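/- arXiv:1906.06561 — 4 statements merged into one kernel-verified Lean document; each statement's English description precedes it below -/
import Mathlib

section
/- The Cartesian product C3 □ C5 of a 3-cycle and a 5-cycle admits a star coloring with 6 colors. -/
/-- A star coloring of `G` with `k` colors: a proper vertex coloring such that
no path on 4 vertices is bicolored. -/
def IsStarColoring {V : Type*} (G : SimpleGraph V) {k : ℕ} (c : V → Fin k) : Prop :=
  (∀ u v : V, G.Adj u v → c u ≠ c v) ∧
  ¬ ∃ v1 v2 v3 v4 : V,
      v1 ≠ v2 ∧ v1 ≠ v3 ∧ v1 ≠ v4 ∧ v2 ≠ v3 ∧ v2 ≠ v4 ∧ v3 ≠ v4 ∧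
      G.Adj v1 v2 ∧ G.Adj v2 v3 ∧ G.Adj v3 v4 ∧ c v1 = c v3 ∧ c v2 = c v4

namespace SimpleGraph

instance boxProdDecidableRel {α β : Type*} {G : SimpleGraph α} {H : SimpleGraph β}
    [DecidableEq α] [DecidableEq β] [DecidableRel G.Adj] [DecidableRel H.Adj] :
    DecidableRel (G □ H).Adj :=
  fun _ _ => decidable_of_iff _ boxProd_adj.symm

end SimpleGraph

-- Organised around the middle edge `v2 v3`, so that `decide` explores paths, not all quadruples.
theorem isStarColoring_of_forall_adj {V : Type*} {G : SimpleGraph V} {k : ℕ} {c : V → Fin k}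
    (hproper : ∀ u v, G.Adj u v → c u ≠ c v)
    (hpath : ∀ v2 v3, G.Adj v2 v3 → ∀ v1, G.Adj v1 v2 → v1 ≠ v3 → c v1 = c v3 →
      ∀ v4, G.Adj v3 v4 → v4 ≠ v2 → c v2 ≠ c v4) :
    IsStarColoring G c := by
  refine ⟨hproper, ?_⟩
  rintro ⟨v1, v2, v3, v4, -, h13, -, -, h24, -, h12, h23, h34, hc13, hc24⟩
  exact hpath v2 v3 h23 v1 h12 h13 hc13 v4 h34 h24.symm hc24

def starColoringC3C5 : Fin 3 × Fin 5 → Fin 6 :=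
  fun p => ![![1, 4, 0, 2, 5], ![3, 5, 3, 1, 2], ![4, 2, 1, 4, 0]] p.1 p.2

/-- `C3 □ C5` admits a star coloring with 6 colors. -/
theorem six_star_coloring_C3_C5 :
    ∃ c : Fin 3 × Fin 5 → Fin 6,
      IsStarColoring ((SimpleGraph.cycleGraph 3).boxProd (SimpleGraph.cycleGraph 5)) c :=
  ⟨starColoringC3C5, isStarColoring_of_forall_adj (by decide) (by decide)⟩
end

section
/- In any star coloring (with any number of colors) of the Cartesian product C3 □ C5, there do not exist two distinct colors a and b and a column index j (an element of Fin 5) such that both a and b appear among the colors of the vertices of column j (the vertices (i, j) for i in Fin 3) and both a and b also appear among the colors of the vertices of column j+1 (indices taken cyclically modulo 5). In other words, no two consecutive columns contain the same pair of two distinct colors. -/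
open SimpleGraph

theorem eq_or_eq_of_card_le_three {α : Type*} [Fintype α] (hα : Fintype.card α ≤ 3)
    {i₁ i₂ i₃ i₄ : α} (h₁₂ : i₁ ≠ i₂) (h₃₄ : i₃ ≠ i₄) (h₁₃ : i₁ ≠ i₃) (h₂₄ : i₂ ≠ i₄) :
    i₂ = i₃ ∨ i₁ = i₄ := by
  classical
  by_contra! h
  have hcard : ({i₁, i₂, i₃, i₄} : Finset α).card = 4 := by simp [*]
  have := Finset.card_le_univ ({i₁, i₂, i₃, i₄} : Finset α)
  omega

namespace IsStarColoring

variable {V : Type*} {G : SimpleGraph V} {k : ℕ}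

theorem not_bicolored_path {c : V → Fin k} (hc : IsStarColoring G c) {x y z w : V}
    (hxy : G.Adj x y) (hyz : G.Adj y z) (hzw : G.Adj z w) (hxz : x ≠ z) (hyw : y ≠ w)
    (hxz' : c x = c z) : c y ≠ c w := by
  intro hyw'
  have hxw : x ≠ w := by
    rintro rfl
    exact hc.1 z x hzw hxz'.symm
  exact hc.2 ⟨x, y, z, w, hxy.ne, hxz, hxw, hyz.ne, hyw, hzw.ne, hxy, hyz, hzw, hxz', hyw'⟩

variable {α β : Type*} {H : SimpleGraph β} {c : α × β → Fin k}

theorem boxProd_top_not_bicolored_turn (hc : IsStarColoring ((⊤ : SimpleGraph α) □ H) c)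
    {i i₁ i₂ : α} {j j' : β} (hj : H.Adj j j') (hi₁ : i₁ ≠ i) (hi₂ : i ≠ i₂)
    (h₁ : c (i₁, j) = c (i, j')) : c (i, j) ≠ c (i₂, j') := by
  refine hc.not_bicolored_path (z := (i, j')) ?_ ?_ ?_ ?_ ?_ h₁
  · exact boxProd_adj.mpr (Or.inl ⟨(top_adj _ _).mpr hi₁, rfl⟩)
  · exact boxProd_adj.mpr (Or.inr ⟨hj, rfl⟩)
  · exact boxProd_adj.mpr (Or.inl ⟨(top_adj _ _).mpr hi₂, rfl⟩)
  · exact fun h => hj.ne (Prod.ext_iff.mp h).2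
  · exact fun h => hj.ne (Prod.ext_iff.mp h).2

theorem boxProd_top_eq_of_mem_adjacent_columns [Fintype α] (hα : Fintype.card α ≤ 3)
    (hc : IsStarColoring ((⊤ : SimpleGraph α) □ H) c) {j j' : β} (hj : H.Adj j j')
    {a b : Fin k} {i₁ i₂ i₃ i₄ : α} (h₁ : c (i₁, j) = a) (h₂ : c (i₂, j) = b)
    (h₃ : c (i₃, j') = a) (h₄ : c (i₄, j') = b) : a = b := by
  by_contra hab
  have hrow {i i' : α} (h : c (i, j) = c (i', j')) : i ≠ i' := by
    rintro rfl
    exact hc.1 (i, j) (i, j') (boxProd_adj.mpr (Or.inr ⟨hj, rfl⟩)) h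
  have h₁₂ : i₁ ≠ i₂ := by rintro rfl; exact hab (h₁.symm.trans h₂)
  have h₃₄ : i₃ ≠ i₄ := by rintro rfl; exact hab (h₃.symm.trans h₄)
  have h₁₃ : i₁ ≠ i₃ := hrow (h₁.trans h₃.symm)
  have h₂₄ : i₂ ≠ i₄ := hrow (h₂.trans h₄.symm)
  obtain rfl | rfl := eq_or_eq_of_card_le_three hα h₁₂ h₃₄ h₁₃ h₂₄
  · exact hc.boxProd_top_not_bicolored_turn hj h₁₂ h₃₄ (h₁.trans h₃.symm) (h₂.trans h₄.symm)
  · exact hc.boxProd_top_not_bicolored_turn hj h₁₂.symm h₁₃ (h₂.trans h₄.symm)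
      (h₁.trans h₃.symm)

end IsStarColoring

/-- In any star coloring of `C3 □ C5`, no two consecutive columns contain the same
pair of two distinct colors. -/
theorem no_two_consecutive_columns_same_pair (k : ℕ)
    (c : Fin 3 × Fin 5 → Fin k)
    (hc : IsStarColoring ((SimpleGraph.cycleGraph 3).boxProd (SimpleGraph.cycleGraph 5)) c) :
    ¬ ∃ (a b : Fin k) (j : Fin 5), a ≠ b ∧
      (∃ i : Fin 3, c (i, j) = a) ∧ (∃ i : Fin 3, c (i, j) = b) ∧
      (∃ i : Fin 3, c (i, j + 1) = a) ∧ (∃ i : Fin 3, c (i, j + 1) = b) := by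
  rintro ⟨a, b, j, hab, ⟨i₁, h₁⟩, ⟨i₂, h₂⟩, ⟨i₃, h₃⟩, ⟨i₄, h₄⟩⟩
  rw [cycleGraph_three_eq_top] at hc
  have hj : (cycleGraph 5).Adj j (j + 1) := cycleGraph_adj.mpr (Or.inr (by simp))
  exact hab (hc.boxProd_top_eq_of_mem_adjacent_columns (by simp) hj h₁ h₂ h₃ h₄)
end

section
/- For every natural number n with n ≥ 3, the star chromatic number of the Cartesian product C4 □ Cn equals 5; that is, C4 □ Cn admits a star coloring with 5 colors, and every star coloring of C4 □ Cn uses at least 5 colors. -/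
/-!
Star colorings pull back along graph homomorphisms that are injective on every neighborhood.
Wrapping the path `P₄` around `Cₙ` is such a map, so a star 4-coloring of `C₄ □ Cₙ` would give
one of `C₄ □ P₄`, which a backtracking search rules out. Conversely, for `n ≠ 5` the cycle `Cₙ`
winds locally injectively around the diamond `K₄ - e` in laps of length 4 and 3, and
`C₄ □ (K₄ - e)` has an explicit star 5-coloring; `C₄ □ C₅` is colored directly.
-/

open SimpleGraph

section StarColoring

variable {V W : Type*} {G : SimpleGraph V} {H : SimpleGraph W} {k : ℕ}

theorem IsStarColoring.not_bicolored {c : V → Fin k} (hc : IsStarColoring G c) {v₁ v₂ v₃ v₄ : V}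
    (h₁₂ : G.Adj v₁ v₂) (h₂₃ : G.Adj v₂ v₃) (h₃₄ : G.Adj v₃ v₄) (h₁₃ : v₁ ≠ v₃) (h₂₄ : v₂ ≠ v₄) :
    ¬(c v₁ = c v₃ ∧ c v₂ = c v₄) := by
  rintro ⟨e₁₃, e₂₄⟩
  have h₁₄ : v₁ ≠ v₄ := by
    rintro rfl
    exact hc.1 _ _ h₁₂ e₂₄.symm
  exact hc.2 ⟨v₁, v₂, v₃, v₄, h₁₂.ne, h₁₃, h₁₄, h₂₃.ne, h₂₄, h₃₄.ne, h₁₂, h₂₃, h₃₄, e₁₃, e₂₄⟩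

theorem IsStarColoring.comp_left {c : V → Fin k} (hc : IsStarColoring G c) {l : ℕ}
    {σ : Fin k → Fin l} (hσ : σ.Injective) : IsStarColoring G (σ ∘ c) :=
  ⟨fun u v h e => hc.1 u v h (hσ e), fun ⟨v₁, v₂, v₃, v₄, h₁₂, h₁₃, h₁₄, h₂₃, h₂₄, h₃₄, a₁₂, a₂₃, a₃₄,
    e₁₃, e₂₄⟩ => hc.2 ⟨v₁, v₂, v₃, v₄, h₁₂, h₁₃, h₁₄, h₂₃, h₂₄, h₃₄, a₁₂, a₂₃, a₃₄, hσ e₁₃, hσ e₂₄⟩⟩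

def SimpleGraph.Hom.IsLocallyInjective (f : G →g H) : Prop :=
  ∀ v, Set.InjOn f (G.neighborSet v)

theorem IsStarColoring.comp {c : W → Fin k} (hc : IsStarColoring H c) {f : G →g H}
    (hf : f.IsLocallyInjective) : IsStarColoring G (c ∘ f) := by
  refine ⟨fun u v h => hc.1 _ _ (f.map_adj h), ?_⟩
  rintro ⟨v₁, v₂, v₃, v₄, -, h₁₃, -, -, h₂₄, -, a₁₂, a₂₃, a₃₄, e⟩
  exact hc.not_bicolored (f.map_adj a₁₂) (f.map_adj a₂₃) (f.map_adj a₃₄)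
    (fun h => h₁₃ (hf v₂ a₁₂.symm a₂₃ h)) (fun h => h₂₄ (hf v₃ a₂₃.symm a₃₄ h)) e

end StarColoring

section StarSearch

variable {V : Type*} (G : SimpleGraph V) [G.LocallyFinite] {k : ℕ}

/-- The conditions of a star coloring that involve `v` and only colored vertices. Up to
reversal, `v` is an end or an inner vertex of every `P₄` through it. -/
def StarConsistentAt (p : V → Option (Fin k)) (v : V) : Prop :=
  (∀ u ∈ G.neighborFinset v, p u ≠ p v) ∧
  (∀ v₂ ∈ G.neighborFinset v, ∀ x ∈ p v₂, ∀ v₃ ∈ G.neighborFinset v₂, v ≠ v₃ → p v₃ = p v →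
    ∀ v₄ ∈ G.neighborFinset v₃, v₂ ≠ v₄ → p v₄ ≠ some x) ∧
  (∀ v₁ ∈ G.neighborFinset v, ∀ x ∈ p v₁, ∀ v₃ ∈ G.neighborFinset v, v₁ ≠ v₃ → p v₃ = some x →
    ∀ v₄ ∈ G.neighborFinset v₃, v ≠ v₄ → p v₄ ≠ p v)

instance [DecidableEq V] (p : V → Option (Fin k)) (v : V) :
    Decidable (StarConsistentAt G p v) :=
  -- instance search does not find this for the conjunction as a whole
  @instDecidableAnd _ _ inferInstance (@instDecidableAnd _ _ inferInstance inferInstance)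

def starSearch [DecidableEq V] (p : V → Option (Fin k)) : List V → Bool
  | [] => true
  | v :: vs => (List.finRange k).any fun x =>
      decide (StarConsistentAt G (Function.update p v (some x)) v) &&
        starSearch (Function.update p v (some x)) vs

variable {G}

theorem IsStarColoring.starConsistentAt {c : V → Fin k} (hc : IsStarColoring G c)
    {p : V → Option (Fin k)} (hp : ∀ u, ∀ x ∈ p u, c u = x) {v : V} (hv : p v = some (c v)) :
    StarConsistentAt G p v := by
  have hcol : ∀ {u w}, p u = some (c w) → c u = c w := hp _ _
  refine ⟨fun u hu e => ?_, fun v₂ h₂ x hx v₃ h₃ h₁₃ e₃ v₄ h₄ h₂₄ e₄ => ?_,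
    fun v₁ h₁ x hx v₃ h₃ h₁₃ e₃ v₄ h₄ h₂₄ e₄ => ?_⟩
  · exact hc.1 v u ((mem_neighborFinset _ _ _).1 hu) (hcol (e.trans hv)).symm
  · rw [mem_neighborFinset] at h₂ h₃ h₄
    obtain rfl := hp v₂ x hx
    exact hc.not_bicolored h₂ h₃ h₄ h₁₃ h₂₄ ⟨(hcol (e₃.trans hv)).symm, (hcol e₄).symm⟩
  · rw [mem_neighborFinset] at h₁ h₃ h₄
    obtain rfl := hp v₁ x hx
    exact hc.not_bicolored h₁.symm h₃ h₄ h₁₃ h₂₄ ⟨(hcol e₃).symm, (hcol (e₄.trans hv)).symm⟩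

theorem IsStarColoring.starSearch_eq_true [DecidableEq V] {c : V → Fin k}
    (hc : IsStarColoring G c) (vs : List V) {p : V → Option (Fin k)}
    (hp : ∀ u, ∀ x ∈ p u, c u = x) : starSearch G p vs = true := by
  induction vs generalizing p with
  | nil => rfl
  | cons v vs ih =>
    have hp' : ∀ u, ∀ x ∈ Function.update p v (some (c v)) u, c u = x := by
      intro u x hx
      rcases eq_or_ne u v with rfl | huv
      · simpa using hx
      · exact hp u x (by simpa [huv] using hx)
    simp only [starSearch, List.any_eq_true, List.mem_finRange, true_and, Bool.and_eq_true,
      decide_eq_true_eq]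
    exact ⟨c v, hc.starConsistentAt hp' (by simp), ih hp'⟩

theorem not_isStarColoring_of_starSearch_eq_false [DecidableEq V] (v : V) (vs : List V)
    (h : starSearch G (Function.update (fun _ => none) v (some (0 : Fin (k + 1)))) vs = false)
    (c : V → Fin (k + 1)) : ¬IsStarColoring G c := by
  intro hc
  -- Permuting the colors, `v` gets color `0`.
  have hc' := hc.comp_left (Equiv.swap (c v) 0).injective
  refine Bool.false_ne_true (h ▸ hc'.starSearch_eq_true vs fun u x hx => ?_)
  rcases eq_or_ne u v with rfl | huv
  · obtain rfl : 0 = x := by simpa using hx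
    simp
  · simp [huv] at hx

theorem isStarColoring_of_forall_starConsistentAt {c : V → Fin k}
    (h : ∀ v, StarConsistentAt G (some ∘ c) v) : IsStarColoring G c := by
  refine ⟨fun u v huv e => (h u).1 v ((mem_neighborFinset _ _ _).2 huv) (by simp [e]), ?_⟩
  rintro ⟨v₁, v₂, v₃, v₄, -, h₁₃, -, -, h₂₄, -, a₁₂, a₂₃, a₃₄, e₁₃, e₂₄⟩
  exact (h v₁).2.1 v₂ ((mem_neighborFinset _ _ _).2 a₁₂) _ rfl v₃
    ((mem_neighborFinset _ _ _).2 a₂₃) h₁₃ (by simp [e₁₃]) v₄ ((mem_neighborFinset _ _ _).2 a₃₄)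
    h₂₄ (by simp [e₂₄])

end StarSearch

namespace SimpleGraph

section BoxProd

variable {α α' β β' : Type*} {G : SimpleGraph α} {G' : SimpleGraph α'} {H : SimpleGraph β}
  {H' : SimpleGraph β'}

@[simps]
def Hom.boxProd (f : G →g G') (g : H →g H') : G.boxProd H →g G'.boxProd H' where
  toFun x := (f x.1, g x.2)
  map_rel' := by
    rintro ⟨a, b⟩ ⟨a', b'⟩ (⟨h, rfl⟩ | ⟨h, rfl⟩)
    exacts [Or.inl ⟨f.map_adj h, rfl⟩, Or.inr ⟨g.map_adj h, rfl⟩]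

theorem Hom.IsLocallyInjective.boxProd {f : G →g G'} {g : H →g H'} (hf : f.IsLocallyInjective)
    (hg : g.IsLocallyInjective) : (f.boxProd g).IsLocallyInjective := by
  rintro ⟨a, b⟩ ⟨a₁, b₁⟩ h₁ ⟨a₂, b₂⟩ h₂ e
  simp only [mem_neighborSet, boxProd_adj, Hom.boxProd_apply, Prod.mk.injEq] at h₁ h₂ e ⊢
  rcases h₁ with ⟨h₁, rfl⟩ | ⟨h₁, rfl⟩ <;> rcases h₂ with ⟨h₂, rfl⟩ | ⟨h₂, rfl⟩
  · exact ⟨hf a h₁ h₂ e.1, rfl⟩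
  · exact absurd e.1 (f.map_adj h₁).ne'
  · exact absurd e.1.symm (f.map_adj h₂).ne'
  · exact ⟨rfl, hg b h₁ h₂ e.2⟩

theorem Hom.isLocallyInjective_id : (Hom.id : G →g G).IsLocallyInjective :=
  fun _ => Set.injOn_id _

end BoxProd

instance (n : ℕ) : DecidableRel (pathGraph n).Adj :=
  fun _ _ => decidable_of_iff _ pathGraph_adj.symm

variable {W : Type*} {H : SimpleGraph W}

def pathGraphToCycleGraph (m n : ℕ) : pathGraph m →g cycleGraph (n + 3) where
  toFun j := Fin.ofNat (n + 3) j
  map_rel' {u v} h := by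
    rw [pathGraph_adj] at h
    rw [cycleGraph_adj, sub_eq_iff_eq_add', sub_eq_iff_eq_add']
    rcases h with h | h
    · right; simp [Fin.ext_iff, Fin.val_add, ← h, Nat.add_mod]
    · left; simp [Fin.ext_iff, Fin.val_add, ← h, Nat.add_mod]

theorem pathGraphToCycleGraph_isLocallyInjective (m n : ℕ) :
    (pathGraphToCycleGraph m n).IsLocallyInjective := by
  intro j u hu w hw e
  rw [mem_neighborSet, pathGraph_adj] at hu hw
  replace e : u.val ≡ w.val [MOD n + 3] := congrArg Fin.val e
  have h2 : ¬ 2 ≡ 0 [MOD n + 3] := by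
    rw [Nat.ModEq, Nat.mod_eq_of_lt (by omega), Nat.zero_mod]
    omega
  by_contra hne
  have := Fin.val_ne_of_ne hne
  rcases (by omega : u.val = w.val + 2 ∨ w.val = u.val + 2) with h | h
  · exact h2 (Nat.ModEq.add_left_cancel' w.val (h ▸ e))
  · exact h2 (Nat.ModEq.add_left_cancel' u.val (h ▸ e.symm))

def cycleGraphHomOfAdj (n : ℕ) (s : Fin (n + 2) → W) (hs : ∀ j, H.Adj (s j) (s (j + 1))) :
    cycleGraph (n + 2) →g H where
  toFun := s
  map_rel' {u v} h := by
    rcases cycleGraph_adj.1 h with h | h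
    · rw [sub_eq_iff_eq_add'] at h
      exact h ▸ (hs v).symm
    · rw [sub_eq_iff_eq_add'] at h
      exact h ▸ hs u

open Fin.CommRing in
theorem cycleGraphHomOfAdj_isLocallyInjective (n : ℕ) (s : Fin (n + 2) → W)
    (hs : ∀ j, H.Adj (s j) (s (j + 1))) (hs₂ : ∀ j, s j ≠ s (j + 2)) :
    (cycleGraphHomOfAdj n s hs).IsLocallyInjective := by
  intro j u hu w hw e
  change s u = s w at e
  rw [mem_neighborSet, cycleGraph_adj] at hu hw
  have : u = w ∨ u = w + 2 ∨ w = u + 2 := by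
    rcases hu with hu | hu <;> rcases hw with hw | hw
    · exact .inl (by linear_combination hw - hu)
    · exact .inr (.inr (by linear_combination hw + hu))
    · exact .inr (.inl (by linear_combination hu + hw))
    · exact .inl (by linear_combination hu - hw)
  rcases this with h | rfl | rfl
  · exact h
  · exact absurd e.symm (hs₂ w)
  · exact absurd e (hs₂ u)

def diamondGraph : SimpleGraph (Fin 4) := cycleGraph 4 ⊔ edge 0 2

theorem diamondGraph_adj (a b : Fin 4) : diamondGraph.Adj a b ↔ a ≠ b ∧ a.val + b.val ≠ 4 := by
  fin_cases a <;> fin_cases b <;> simp [diamondGraph, edge_adj] <;> decide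

instance : DecidableRel diamondGraph.Adj :=
  fun a b => decidable_of_iff _ (diamondGraph_adj a b).symm

/-- `n % 3` laps around the 4-cycle `0 1 2 3`, then laps around the triangle `0 1 2`; the
4-cycle laps fit into `n ≥ 3` steps unless `n = 5`. -/
def diamondWalk (n : ℕ) (j : Fin n) : Fin 4 :=
  ⟨if j < 4 * (n % 3) then j % 4 else (j - 4 * (n % 3)) % 3, by split_ifs <;> omega⟩

theorem diamondWalk_adj {n : ℕ} (hn : n ≠ 2) (j : Fin (n + 3)) :
    diamondGraph.Adj (diamondWalk _ j) (diamondWalk _ (j + 1)) := by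
  have hj := j.isLt
  have h1 := Fin.val_add_eq_ite j 1
  rw [Fin.val_one] at h1
  simp only [diamondGraph_adj, diamondWalk, ne_eq, Fin.ext_iff]
  generalize (j + 1).val = k at h1 ⊢
  split_ifs at * <;> omega

theorem diamondWalk_ne {n : ℕ} (j : Fin (n + 3)) :
    diamondWalk _ j ≠ diamondWalk _ (j + 2) := by
  have hj := j.isLt
  have h2 := Fin.val_add_eq_ite j 2
  rw [Fin.val_two] at h2
  simp only [diamondWalk, ne_eq, Fin.ext_iff]
  generalize (j + 2).val = k at h2 ⊢
  split_ifs at * <;> omega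

end SimpleGraph

def diamondStarColoring (v : Fin 4 × Fin 4) : Fin 5 :=
  ![![0, 1, 0, 2], ![3, 2, 4, 1], ![4, 0, 3, 0], ![3, 2, 4, 1]] v.2 v.1

def cycleGraphFiveStarColoring (v : Fin 4 × Fin 5) : Fin 5 :=
  ![![0, 1, 0, 2], ![3, 2, 3, 1], ![4, 0, 4, 2], ![1, 3, 1, 0], ![4, 2, 4, 3]] v.2 v.1

theorem isStarColoring_diamondStarColoring :
    IsStarColoring ((cycleGraph 4).boxProd diamondGraph) diamondStarColoring :=
  isStarColoring_of_forall_starConsistentAt (by decide +kernel)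

theorem isStarColoring_cycleGraphFiveStarColoring :
    IsStarColoring ((cycleGraph 4).boxProd (cycleGraph 5)) cycleGraphFiveStarColoring :=
  isStarColoring_of_forall_starConsistentAt (by decide +kernel)

theorem not_isStarColoring_cycleGraph_four_boxProd_pathGraph_four (c : Fin 4 × Fin 4 → Fin 4) :
    ¬IsStarColoring ((cycleGraph 4).boxProd (pathGraph 4)) c :=
  not_isStarColoring_of_starSearch_eq_false (0, 0)
    ((List.finRange 4 ×ˢ List.finRange 4).map Prod.swap).tail (by decide +kernel) c

/-- For `n ≥ 3`, the star chromatic number of `C4 □ Cn` equals 5. -/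
theorem starChromatic_C4_Cn_eq_five (n : ℕ) (hn : 3 ≤ n) :
    (∃ c : Fin 4 × Fin n → Fin 5,
      IsStarColoring ((SimpleGraph.cycleGraph 4).boxProd (SimpleGraph.cycleGraph n)) c) ∧
    (∀ k : ℕ, (∃ c : Fin 4 × Fin n → Fin k,
      IsStarColoring ((SimpleGraph.cycleGraph 4).boxProd (SimpleGraph.cycleGraph n)) c) →
      5 ≤ k) := by
  obtain ⟨n, rfl⟩ : ∃ m, n = m + 3 := ⟨n - 3, by omega⟩
  refine ⟨?_, fun k ⟨c, hc⟩ => ?_⟩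
  · rcases eq_or_ne n 2 with rfl | hn5
    · exact ⟨_, isStarColoring_cycleGraphFiveStarColoring⟩
    · exact ⟨_, isStarColoring_diamondStarColoring.comp (Hom.isLocallyInjective_id.boxProd
        (cycleGraphHomOfAdj_isLocallyInjective _ _ (diamondWalk_adj hn5) diamondWalk_ne))⟩
  · by_contra! hk
    exact not_isStarColoring_cycleGraph_four_boxProd_pathGraph_four _
      ((hc.comp_left (Fin.castLE_injective (by omega : k ≤ 4))).comp
        (Hom.isLocallyInjective_id.boxProd (pathGraphToCycleGraph_isLocallyInjective 4 n)))
end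

section
/- For every natural number n with n ≥ 4, the star chromatic number of the Cartesian product C5 □ Cn equals 5; that is, C5 □ Cn admits a star coloring with 5 colors, and every star coloring of C5 □ Cn uses at least 5 colors. -/
/-!
Lower bound: three consecutive copies of `C5` form a copy of `C5 □ P3` inside `C5 □ Cn`, and
`C5 □ P3` has no star coloring with 4 colors. That is a finite statement, settled by a
backtracking search over its 15 vertices which the kernel evaluates.

Upper bound: if `b` and `a` are star colorings of `G` and `H` with values in `ℤ/5` and a step of
`b` along an edge never cancels a step of `a`, then `(x, y) ↦ b x + a y` is a star coloring of
`G □ H`: a bicolored path on four vertices would have to stay inside one copy of `G` or of `H`.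
Take `b = id` on `C5` (steps `±1`) and for `a` a coloring of `Cn` with steps `±2`: `3` along the
first `t` edges and `2` along the others. It closes up when `5 ∣ 2n + t` and is a star coloring
unless some step differs from both of its neighbours; a suitable `t` exists for every `n ≥ 4`
except `n = 7`, where an explicit coloring is checked instead.
-/

open SimpleGraph

instance SimpleGraph.boxProd.decidableRelAdj {α β : Type*} [DecidableEq α] [DecidableEq β]
    (G : SimpleGraph α) (H : SimpleGraph β) [DecidableRel G.Adj] [DecidableRel H.Adj] :
    DecidableRel (G □ H).Adj :=
  fun _ _ => decidable_of_iff' _ boxProd_adj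

instance SimpleGraph.pathGraph.decidableRelAdj (n : ℕ) : DecidableRel (pathGraph n).Adj :=
  fun _ _ => decidable_of_iff' _ pathGraph_adj

def SimpleGraph.IsPath4 {V : Type*} (G : SimpleGraph V) (v1 v2 v3 v4 : V) : Prop :=
  v1 ≠ v2 ∧ v1 ≠ v3 ∧ v1 ≠ v4 ∧ v2 ≠ v3 ∧ v2 ≠ v4 ∧ v3 ≠ v4 ∧
    G.Adj v1 v2 ∧ G.Adj v2 v3 ∧ G.Adj v3 v4

instance SimpleGraph.IsPath4.decidable {V : Type*} [DecidableEq V] (G : SimpleGraph V)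
    [DecidableRel G.Adj] (v1 v2 v3 v4 : V) : Decidable (G.IsPath4 v1 v2 v3 v4) :=
  inferInstanceAs (Decidable (_ ∧ _))

namespace SimpleGraph.Copy

variable {α β β' : Type*} {G : SimpleGraph α} {H : SimpleGraph β} {H' : SimpleGraph β'}

def boxProdRight (f : Copy H H') : Copy (G □ H) (G □ H') where
  toHom :=
    { toFun := fun p => (p.1, f p.2)
      map_rel' := fun h => by
        rcases boxProd_adj.mp h with ⟨hG, hxy⟩ | ⟨hH, hxy⟩
        · exact boxProd_adj.mpr (Or.inl ⟨hG, congrArg f hxy⟩)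
        · exact boxProd_adj.mpr (Or.inr ⟨f.toHom.map_adj hH, hxy⟩) }
  injective' := by
    rintro ⟨x, y⟩ ⟨x', y'⟩ h
    obtain ⟨rfl, h⟩ := Prod.mk.inj h
    exact congrArg _ (f.injective h)

def pathGraphCycleGraph {m n : ℕ} (h : m ≤ n) : Copy (pathGraph m) (cycleGraph n) where
  toHom := (Hom.ofLE pathGraph_le_cycleGraph).comp
    ⟨Fin.castLE h, fun {_ _} hxy => by simpa [pathGraph_adj] using hxy⟩
  injective' := Fin.castLE_injective h

end SimpleGraph.Copy

namespace IsStarColoring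

variable {V W : Type*} {G : SimpleGraph V} {H : SimpleGraph W} {k l : ℕ}

theorem not_bicolored_s6 {c : V → Fin k} (hc : IsStarColoring G c) {v1 v2 v3 v4 : V}
    (h : G.IsPath4 v1 v2 v3 v4) : ¬(c v1 = c v3 ∧ c v2 = c v4) :=
  let ⟨h12, h13, h14, h23, h24, h34, a12, a23, a34⟩ := h
  fun ⟨e13, e24⟩ => hc.2 ⟨v1, v2, v3, v4, h12, h13, h14, h23, h24, h34, a12, a23, a34, e13, e24⟩

theorem comp_left_s6 {c : V → Fin k} (hc : IsStarColoring G c) {g : Fin k → Fin l}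
    (hg : Function.Injective g) : IsStarColoring G (g ∘ c) :=
  ⟨fun _ _ huv h => hc.1 _ _ huv (hg h),
    fun ⟨v1, v2, v3, v4, h12, h13, h14, h23, h24, h34, a12, a23, a34, e13, e24⟩ =>
      hc.2 ⟨v1, v2, v3, v4, h12, h13, h14, h23, h24, h34, a12, a23, a34, hg e13, hg e24⟩⟩

theorem comap {c : W → Fin k} (hc : IsStarColoring H c) (f : Copy G H) :
    IsStarColoring G (c ∘ f) :=
  ⟨fun _ _ huv => hc.1 _ _ (f.toHom.map_adj huv),
    fun ⟨v1, v2, v3, v4, h12, h13, h14, h23, h24, h34, a12, a23, a34, e13, e24⟩ =>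
      hc.2 ⟨f v1, f v2, f v3, f v4, f.injective.ne h12, f.injective.ne h13, f.injective.ne h14,
        f.injective.ne h23, f.injective.ne h24, f.injective.ne h34, f.toHom.map_adj a12,
        f.toHom.map_adj a23, f.toHom.map_adj a34, e13, e24⟩⟩

theorem of_neighbors {c : V → Fin k} (N : V → List V) (hN : ∀ u v, G.Adj u v → v ∈ N u)
    (hproper : ∀ u, ∀ v ∈ N u, u ≠ v → c u ≠ c v)
    (hstar : ∀ v2, ∀ v1 ∈ N v2, ∀ v3 ∈ N v2, ∀ v4 ∈ N v3,
      v1 ≠ v3 → v2 ≠ v4 → ¬(c v1 = c v3 ∧ c v2 = c v4)) :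
    IsStarColoring G c :=
  ⟨fun u v huv => hproper u v (hN u v huv) huv.ne,
    fun ⟨v1, v2, v3, v4, _, h13, _, _, h24, _, a12, a23, a34, e13, e24⟩ =>
      hstar v2 v1 (hN _ _ a12.symm) v3 (hN _ _ a23) v4 (hN _ _ a34) h13 h24 ⟨e13, e24⟩⟩

theorem boxProd_add {b : V → Fin k} {a : W → Fin k} (hb : IsStarColoring G b)
    (ha : IsStarColoring H a)
    (hba : ∀ x x' y y', G.Adj x x' → H.Adj y y' → b x + a y ≠ b x' + a y') :
    IsStarColoring (G □ H) fun p => b p.1 + a p.2 := by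
  refine ⟨fun ⟨x, y⟩ ⟨x', y'⟩ h => ?_, ?_⟩
  · rcases boxProd_adj.mp h with ⟨hx, rfl⟩ | ⟨hy, rfl⟩
    · exact fun e => hb.1 x x' hx (add_right_cancel e)
    · exact fun e => ha.1 y y' hy (add_left_cancel e)
  rintro ⟨⟨x1, y1⟩, ⟨x2, y2⟩, ⟨x3, y3⟩, ⟨x4, y4⟩, -, h13, h14, -, h24, h34, a12, a23, a34,
    e13, e24⟩
  simp only [boxProd_adj] at a12 a23 a34
  rcases a12 with ⟨g12, rfl⟩ | ⟨k12, rfl⟩ <;> rcases a23 with ⟨g23, rfl⟩ | ⟨k23, rfl⟩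
  · rcases a34 with ⟨g34, rfl⟩ | ⟨k34, rfl⟩
    · simp only [ne_eq, Prod.mk.injEq, and_true] at h13 h14 h24 h34
      exact hb.not_bicolored_s6 ⟨g12.ne, h13, h14, g23.ne, h24, h34, g12, g23, g34⟩
        ⟨add_right_cancel e13, add_right_cancel e24⟩
    · exact hba x2 x3 y1 y4 g23 k34 e24
  · exact hba x1 x2 y1 y3 g12 k23 e13
  · exact hba x1 x3 y1 y2 g23 k12 e13
  · rcases a34 with ⟨g34, rfl⟩ | ⟨k34, rfl⟩
    · exact hba x1 x4 y2 y3 g34 k23 e24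
    · simp only [ne_eq, Prod.mk.injEq, true_and] at h13 h14 h24 h34
      exact ha.not_bicolored_s6 ⟨k12.ne, h13, h14, k23.ne, h24, h34, k12, k23, k34⟩
        ⟨add_left_cancel e13, add_left_cancel e24⟩

end IsStarColoring

theorem Fin.val_add_one_eq_or {n : ℕ} [NeZero n] (i : Fin n) :
    (i + 1 : Fin n).val = i.val + 1 ∨ (i.val + 1 = n ∧ (i + 1 : Fin n).val = 0) := by
  rw [Fin.val_add, Fin.val_one', Nat.add_mod_mod]
  rcases Nat.lt_or_ge (i.val + 1) n with h | h
  · exact Or.inl (Nat.mod_eq_of_lt h)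
  · have h' : i.val + 1 = n := le_antisymm i.isLt h
    exact Or.inr ⟨h', by rw [h', Nat.mod_self]⟩

theorem SimpleGraph.cycleGraph_adj_iff_eq_add_one {n : ℕ} {u v : Fin (n + 2)} :
    (cycleGraph (n + 2)).Adj u v ↔ v = u + 1 ∨ u = v + 1 := by
  rw [cycleGraph_adj, sub_eq_iff_eq_add', sub_eq_iff_eq_add', or_comm]

theorem SimpleGraph.cycleGraph_path4_consecutive {n : ℕ} {v1 v2 v3 v4 : Fin (n + 2)}
    (h : (cycleGraph (n + 2)).IsPath4 v1 v2 v3 v4) :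
    (v2 = v1 + 1 ∧ v3 = v1 + 2 ∧ v4 = v1 + 3) ∨ (v3 = v4 + 1 ∧ v2 = v4 + 2 ∧ v1 = v4 + 3) := by
  obtain ⟨-, h13, -, -, h24, -, a12, a23, a34⟩ := h
  rw [cycleGraph_adj_iff_eq_add_one] at a12 a23 a34
  grind

theorem isStarColoring_cycleGraph {n k : ℕ} {a : Fin (n + 2) → Fin k}
    (hadj : ∀ j, a (j + 1) ≠ a j) (hpath : ∀ j, ¬(a (j + 2) = a j ∧ a (j + 3) = a (j + 1))) :
    IsStarColoring (cycleGraph (n + 2)) a := by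
  refine ⟨fun u v huv => ?_, ?_⟩
  · rcases cycleGraph_adj_iff_eq_add_one.mp huv with rfl | rfl
    exacts [(hadj u).symm, hadj v]
  rintro ⟨v1, v2, v3, v4, h12, h13, h14, h23, h24, h34, a12, a23, a34, e13, e24⟩
  obtain ⟨rfl, rfl, rfl⟩ | ⟨rfl, rfl, rfl⟩ :=
    cycleGraph_path4_consecutive ⟨h12, h13, h14, h23, h24, h34, a12, a23, a34⟩
  exacts [hpath v1 ⟨e13.symm, e24.symm⟩, hpath v4 ⟨e24, e13⟩]

section Backtracking

variable {k : ℕ}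

def extendable (ok : ℕ → List (Fin k) → Bool) : ℕ → ℕ → List (Fin k) → Bool
  | 0, _, _ => true
  | n + 1, v, l =>
    (List.finRange k).any fun d => ok v (l ++ [d]) && extendable ok n (v + 1) (l ++ [d])

theorem extendable_map_range {ok : ℕ → List (Fin k) → Bool} {g : ℕ → Fin k} {n v : ℕ}
    (h : ∀ w, v ≤ w → w < v + n → ok w ((List.range (w + 1)).map g) = true) :
    extendable ok n v ((List.range v).map g) = true := by
  induction n generalizing v with
  | zero => rfl
  | succ n ih =>
    have hsucc : (List.range v).map g ++ [g v] = (List.range (v + 1)).map g := by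
      simp [List.range_succ]
    simp only [extendable, List.any_eq_true, Bool.and_eq_true]
    exact ⟨g v, List.mem_finRange _, hsucc ▸ h v le_rfl (by omega),
      hsucc ▸ ih fun w hw hwn => h w (by omega) (by omega)⟩

end Backtracking

namespace C5P3

/-- Vertex `3 * i + j` is `(i, j)`; numbering along `P3` first keeps the search small. -/
def vertex (v : ℕ) : Fin 5 × Fin 3 := (Fin.ofNat 5 (v / 3), Fin.ofNat 3 v)

def neighbors (v : ℕ) : List ℕ :=
  [3 * ((v / 3 + 1) % 5) + v % 3, 3 * ((v / 3 + 4) % 5) + v % 3] ++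
    (if v % 3 < 2 then [v + 1] else []) ++ (if 0 < v % 3 then [v - 1] else [])

/-- Paths on four vertices whose largest vertex is `v`; up to reversal, `v` comes first or
second. -/
def paths (v : ℕ) : List (ℕ × ℕ × ℕ × ℕ) :=
  ((neighbors v).flatMap fun b => (neighbors b).flatMap fun c =>
      (neighbors c).map fun d => (v, b, c, d)) ++
  ((neighbors v).flatMap fun a => (neighbors v).flatMap fun c =>
      (neighbors c).map fun d => (a, v, c, d))
  |>.filter fun (a, b, c, d) => a ≤ v ∧ b ≤ v ∧ c ≤ v ∧ d ≤ v ∧ a ≠ c ∧ b ≠ d ∧ a ≠ d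

theorem neighbors_adj : ∀ v < 15, ∀ u ∈ neighbors v,
    (cycleGraph 5 □ pathGraph 3).Adj (vertex u) (vertex v) := by
  decide

theorem paths_isPath4 : ∀ v < 15, ∀ q ∈ paths v,
    q.1 ≤ v ∧ q.2.1 ≤ v ∧ q.2.2.1 ≤ v ∧ q.2.2.2 ≤ v ∧
      (cycleGraph 5 □ pathGraph 3).IsPath4 (vertex q.1) (vertex q.2.1) (vertex q.2.2.1)
        (vertex q.2.2.2) := by
  decide

/-- `l` lists the colors of the vertices `0, …, v`. -/
def okAt (v : ℕ) (l : List (Fin 4)) : Bool :=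
  (neighbors v).all (fun u => !decide (u < v) || l[u]? != l[v]?) &&
    (paths v).all fun (a, b, c, d) => !(l[a]? == l[c]? && l[b]? == l[d]?)

theorem okAt_of_isStarColoring {c : Fin 5 × Fin 3 → Fin 4}
    (hc : IsStarColoring (cycleGraph 5 □ pathGraph 3) c) {v : ℕ} (hv : v < 15) :
    okAt v ((List.range (v + 1)).map (c ∘ vertex)) = true := by
  have get (u : ℕ) (hu : u ≤ v) :
      ((List.range (v + 1)).map (c ∘ vertex))[u]? = some (c (vertex u)) := by
    simp [List.getElem?_range (Nat.lt_succ_of_le hu)]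
  simp only [okAt, Bool.and_eq_true, List.all_eq_true]
  refine ⟨fun u hu => ?_, fun ⟨a, b, c', d⟩ hq => ?_⟩
  · by_cases huv : u < v
    · simp [get u huv.le, hc.1 _ _ (neighbors_adj v hv u hu)]
    · simp [huv]
  · obtain ⟨ha, hb, hc', hd, hpath⟩ := paths_isPath4 v hv _ hq
    simpa [get a ha, get b hb, get c' hc', get d hd] using
      not_and_or.mp (hc.not_bicolored_s6 hpath)

theorem not_extendable : extendable okAt 14 1 [0] = false := by decide +kernel

theorem not_isStarColoring (c : Fin 5 × Fin 3 → Fin 4) :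
    ¬IsStarColoring (cycleGraph 5 □ pathGraph 3) c := by
  intro hc
  wlog h0 : c (0, 0) = 0 generalizing c
  · exact this _ (hc.comp_left_s6 (Equiv.swap (c (0, 0)) 0).injective) (Equiv.swap_apply_left _ _)
  have hext : extendable okAt 14 1 ((List.range 1).map (c ∘ vertex)) = true :=
    extendable_map_range fun w _ hw => okAt_of_isStarColoring hc (by omega)
  have hstart : (List.range 1).map (c ∘ vertex) = [0] := by simpa [vertex] using h0
  rw [hstart, not_extendable] at hext
  exact Bool.false_ne_true hext

end C5P3

theorem five_le_of_isStarColoring {n k : ℕ} (hn : 3 ≤ n) {c : Fin 5 × Fin n → Fin k}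
    (hc : IsStarColoring (cycleGraph 5 □ cycleGraph n) c) : 5 ≤ k := by
  by_contra! hk
  exact C5P3.not_isStarColoring _ <|
    (hc.comp_left_s6 (Fin.castLE_injective (by omega : k ≤ 4))).comap
      (Copy.pathGraphCycleGraph hn).boxProdRight

/-- Its step from `j` to `j + 1` is `3` for `j < t` and `2` otherwise; when `t < n` and
`5 ∣ 2n + t` this includes the step from `n - 1` back to `0`. -/
def cycleShift (t : ℕ) {n : ℕ} (j : Fin n) : Fin 5 := Fin.ofNat 5 (2 * (j : ℕ) + min (j : ℕ) t)

section CycleShift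

variable {n t : ℕ}

theorem cycleShift_eq_iff {i j : Fin n} :
    cycleShift t i = cycleShift t j ↔
      (2 * (i : ℕ) + min (i : ℕ) t) % 5 = (2 * (j : ℕ) + min (j : ℕ) t) % 5 := by
  simp [cycleShift, Fin.ext_iff]

theorem cycleShift_add_one_sub (h5 : 5 ∣ 2 * (n + 2) + t) (ht : t ≤ n + 1) (j : Fin (n + 2)) :
    cycleShift t (j + 1) - cycleShift t j = 2 ∨ cycleShift t (j + 1) - cycleShift t j = 3 := by
  have e1 := Fin.val_add_one_eq_or j
  unfold cycleShift
  generalize ((j + 1 : Fin (n + 2)) : ℕ) = x1 at *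
  generalize (j : ℕ) = x0 at *
  simp only [Fin.ext_iff, Fin.sub_def, Fin.val_ofNat]
  omega

theorem cycleShift_sub_of_adj (h5 : 5 ∣ 2 * (n + 2) + t) (ht : t ≤ n + 1) {y y' : Fin (n + 2)}
    (h : (cycleGraph (n + 2)).Adj y y') :
    cycleShift t y' - cycleShift t y = 2 ∨ cycleShift t y' - cycleShift t y = 3 := by
  rcases cycleGraph_adj_iff_eq_add_one.mp h with rfl | rfl
  · exact cycleShift_add_one_sub h5 ht y
  · rw [← neg_sub]
    rcases cycleShift_add_one_sub h5 ht y' with h | h <;> rw [h] <;> decide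

theorem isStarColoring_cycleShift (h5 : 5 ∣ 2 * (n + 2) + t) (ht : t = 0 ∨ 2 ≤ t ∧ t ≤ n) :
    IsStarColoring (cycleGraph (n + 2)) (cycleShift t) := by
  refine isStarColoring_cycleGraph (fun j => ?_) (fun j => ?_)
  · rw [← sub_ne_zero]
    rcases cycleShift_add_one_sub h5 (by omega) j with h | h <;> rw [h] <;> decide
  · rw [show j + 2 = j + 1 + 1 by grind, show j + 3 = j + 1 + 1 + 1 by grind, cycleShift_eq_iff,
      cycleShift_eq_iff]
    have e1 := Fin.val_add_one_eq_or j
    have e2 := Fin.val_add_one_eq_or (j + 1)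
    have e3 := Fin.val_add_one_eq_or (j + 1 + 1)
    generalize ((j + 1 + 1 + 1 : Fin (n + 2)) : ℕ) = x3 at *
    generalize ((j + 1 + 1 : Fin (n + 2)) : ℕ) = x2 at *
    generalize ((j + 1 : Fin (n + 2)) : ℕ) = x1 at *
    generalize (j : ℕ) = x0 at *
    rcases e1 with rfl | ⟨h1, rfl⟩ <;> rcases e2 with rfl | ⟨h2, rfl⟩ <;>
      rcases e3 with rfl | ⟨h3, rfl⟩ <;> omega

end CycleShift

theorem exists_isStarColoring_of_ne_seven {n : ℕ} (hn : 4 ≤ n) (h7 : n ≠ 7) :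
    ∃ c : Fin 5 × Fin n → Fin 5, IsStarColoring (cycleGraph 5 □ cycleGraph n) c := by
  obtain ⟨t, h5, ht⟩ : ∃ t, 5 ∣ 2 * n + t ∧ (t = 0 ∨ 2 ≤ t ∧ t + 2 ≤ n) := by
    have : n % 5 < 5 := Nat.mod_lt _ (by norm_num)
    interval_cases h : n % 5
    exacts [⟨0, by omega, by omega⟩, ⟨3, by omega, by omega⟩, ⟨6, by omega, by omega⟩,
      ⟨4, by omega, by omega⟩, ⟨2, by omega, by omega⟩]
  obtain ⟨m, rfl⟩ : ∃ m, n = m + 2 := ⟨n - 2, by omega⟩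
  have hC5 : IsStarColoring (cycleGraph 5) (id : Fin 5 → Fin 5) :=
    isStarColoring_cycleGraph (by decide) (by decide)
  have hcross : ∀ x x' A A' : Fin 5, (cycleGraph 5).Adj x x' → (A' - A = 2 ∨ A' - A = 3) →
      x + A ≠ x' + A' := by
    decide
  exact ⟨_, hC5.boxProd_add (isStarColoring_cycleShift h5 (by omega)) fun x x' _ _ hx hy =>
    hcross x x' _ _ hx (cycleShift_sub_of_adj h5 (by omega) hy)⟩

def torusNeighbors {m n : ℕ} [NeZero m] [NeZero n] (u : Fin m × Fin n) :
    List (Fin m × Fin n) :=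
  [(u.1 + 1, u.2), (u.1 - 1, u.2), (u.1, u.2 + 1), (u.1, u.2 - 1)]

theorem mem_torusNeighbors_of_adj {m n : ℕ} {u v : Fin (m + 2) × Fin (n + 2)}
    (h : (cycleGraph (m + 2) □ cycleGraph (n + 2)).Adj u v) : v ∈ torusNeighbors u := by
  simp only [boxProd_adj, cycleGraph_adj_iff_eq_add_one] at h
  simp only [torusNeighbors, List.mem_cons, List.not_mem_nil, Prod.ext_iff, or_false]
  grind

/-- No coloring of the form `(i, j) ↦ b i + a j` is a star coloring of `C5 □ C7`. -/
def c5c7Coloring : Fin 5 × Fin 7 → Fin 5 := fun p =>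
  ![![0, 1, 0, 2, 0, 1, 2],
    ![2, 3, 4, 1, 4, 3, 4],
    ![1, 0, 2, 3, 2, 0, 2],
    ![4, 3, 1, 0, 1, 2, 3],
    ![3, 2, 4, 1, 3, 4, 1]] p.1 p.2

theorem isStarColoring_c5c7Coloring :
    IsStarColoring (cycleGraph 5 □ cycleGraph 7) c5c7Coloring :=
  .of_neighbors torusNeighbors (fun _ _ => mem_torusNeighbors_of_adj) (by decide +kernel)
    (by decide +kernel)

/-- For `n ≥ 4`, the star chromatic number of `C5 □ Cn` equals 5. -/
theorem starChromatic_C5_Cn_eq_five (n : ℕ) (hn : 4 ≤ n) :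
    (∃ c : Fin 5 × Fin n → Fin 5,
      IsStarColoring ((SimpleGraph.cycleGraph 5).boxProd (SimpleGraph.cycleGraph n)) c) ∧
    (∀ k : ℕ, (∃ c : Fin 5 × Fin n → Fin k,
      IsStarColoring ((SimpleGraph.cycleGraph 5).boxProd (SimpleGraph.cycleGraph n)) c) →
      5 ≤ k) := by
  refine ⟨?_, fun k ⟨c, hc⟩ => five_le_of_isStarColoring (by omega) hc⟩
  obtain rfl | h7 := eq_or_ne n 7
  · exact ⟨_, isStarColoring_c5c7Coloring⟩
  · exact exists_isStarColoring_of_ne_seven hn h7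
end
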